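/- arXiv:1206.0079 — 4 statements merged into one kernel-verified Lean document; each statement's English description precedes it below -/
import Mathlib

section
/- Let A : Fin 3 → Fin 3 → ℝ with A ≠ 0 and B : Fin 3 → Fin 3 → Fin 3 → ℝ, and set T := ∑_{n,i,j} B_{nij}² − (∑_{i,j} A_{ij}²)^{-1}·∑_n (∑_{i,j} A_{ij} B_{nij})². Then (∑_{i,j} A_{ij}²)·T ≥ (1/18)·∑_d (∑_{i,j} (A_{ij} B_{idj} − A_{dj} B_{iij}))² + (1/2)·∑_{(i,j,n,d,m) : (n,m) ≠ (i,j)} (A_{ij} B_{ndm} − A_{dm} B_{nij})². -/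
/-!
By Lagrange's identity, applied for each `n` to the 9-vectors `A` and `B n`, the quantity
`|A|² T` equals `½ ∑ (A_{ij} B_{ndm} − A_{dm} B_{nij})²`, the sum running over all `i, j, n, d, m`.
The terms with `(n, m) = (i, j)` are `(A_{ij} B_{idj} − A_{dj} B_{iij})²`; for each `d`, Cauchy–Schwarz
over the nine pairs `(i, j)` bounds their sum from below by `1/9 (∑_{i,j} (A_{ij} B_{idj} − A_{dj} B_{iij}))²`.
-/

open Finset

theorem lagrange_identity {ι : Type*} (s : Finset ι) (f g : ι → ℝ) :
    (∑ i ∈ s, f i ^ 2) * (∑ i ∈ s, g i ^ 2) - (∑ i ∈ s, f i * g i) ^ 2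
      = (1 / 2) * ∑ i ∈ s, ∑ j ∈ s, (f i * g j - f j * g i) ^ 2 := by
  have expand : ∀ i j, (f i * g j - f j * g i) ^ 2
      = f i ^ 2 * g j ^ 2 + g i ^ 2 * f j ^ 2 - 2 * (f i * g i) * (f j * g j) := by
    intros; ring
  simp only [expand, sum_add_distrib, sum_sub_distrib, ← mul_sum, ← sum_mul]
  ring

theorem sum_sq_mul_sub_inv_mul_eq_half_sum_sq {ι κ : Type*} [Fintype ι] [Fintype κ]
    (a : ι → ℝ) (b : κ → ι → ℝ) :
    (∑ p, a p ^ 2) * (∑ n, ∑ p, b n p ^ 2 - (∑ p, a p ^ 2)⁻¹ * ∑ n, (∑ p, a p * b n p) ^ 2)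
      = (1 / 2) * ∑ p, ∑ n, ∑ q, (a p * b n q - a q * b n p) ^ 2 := by
  rcases eq_or_ne (∑ p, a p ^ 2) 0 with ha | ha
  · have a_eq_zero : ∀ p, a p = 0 := by
      simpa using (sum_eq_zero_iff_of_nonneg fun p _ => sq_nonneg (a p)).1 ha
    simp [a_eq_zero]
  · rw [mul_sub, mul_inv_cancel_left₀ ha, mul_sum, ← sum_sub_distrib, sum_comm (s := univ),
      mul_sum]
    simp only [lagrange_identity]

theorem sum_sum_sum_eq_sum_ite_ne_add {α β γ : Type*} [Fintype α] [Fintype β] [Fintype γ]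
    [DecidableEq α] [DecidableEq γ] (F : α → β → γ → ℝ) (i : α) (j : γ) :
    ∑ n, ∑ d, ∑ m, F n d m
      = ∑ n, ∑ d, ∑ m, (if (n, m) ≠ (i, j) then F n d m else 0) + ∑ d, F i d j := by
  have diag : ∑ d, F i d j = ∑ n, ∑ d, ∑ m, if (n, m) = (i, j) then F n d m else 0 := by
    simp [ite_and, sum_ite_eq']
  rw [diag, ← sum_add_distrib]
  refine sum_congr rfl fun n _ => ?_
  rw [← sum_add_distrib]
  refine sum_congr rfl fun d _ => ?_
  rw [← sum_add_distrib]
  exact sum_congr rfl fun m _ => by by_cases h : (n, m) = (i, j) <;> simp [h]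

theorem sum_sq_sum_le_card_mul {ι κ : Type*} [Fintype ι] [Fintype κ] (c : ι → κ → ℝ) :
    ∑ d, (∑ p, c p d) ^ 2 ≤ Fintype.card ι * ∑ p, ∑ d, c p d ^ 2 := by
  rw [sum_comm, mul_sum]
  exact sum_le_sum fun d _ => sq_sum_le_card_mul_sum_sq

theorem second_fundamental_form_T_inequality_general
    (A : Fin 3 → Fin 3 → ℝ) (B : Fin 3 → Fin 3 → Fin 3 → ℝ)
    (T : ℝ)
    (hT : T = (∑ n, ∑ i, ∑ j, (B n i j) ^ 2)
        - (∑ i, ∑ j, (A i j) ^ 2)⁻¹ * ∑ n, (∑ i, ∑ j, A i j * B n i j) ^ 2) :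
    (∑ i, ∑ j, (A i j) ^ 2) * T ≥
      (1 / 18) * ∑ d, (∑ i, ∑ j, (A i j * B i d j - A d j * B i i j)) ^ 2
      + (1 / 2) * ∑ i, ∑ j, ∑ n, ∑ d, ∑ m,
          (if (n, m) ≠ (i, j) then (A i j * B n d m - A d m * B n i j) ^ 2 else 0) := by
  have lagrange := sum_sq_mul_sub_inv_mul_eq_half_sum_sq
    (fun p : Fin 3 × Fin 3 => A p.1 p.2) (fun n p => B n p.1 p.2)
  have cauchy_schwarz := sum_sq_sum_le_card_mul
    (fun (p : Fin 3 × Fin 3) d => A p.1 p.2 * B p.1 d p.2 - A d p.2 * B p.1 p.1 p.2)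
  simp only [Fintype.sum_prod_type, Fintype.card_prod, Fintype.card_fin, Nat.cast_mul,
    Nat.cast_ofNat] at lagrange cauchy_schwarz
  have split_diag : ∀ i j, ∑ n, ∑ d, ∑ m, (A i j * B n d m - A d m * B n i j) ^ 2
      = ∑ n, ∑ d, ∑ m, (if (n, m) ≠ (i, j) then (A i j * B n d m - A d m * B n i j) ^ 2 else 0)
        + ∑ d, (A i j * B i d j - A d j * B i i j) ^ 2 :=
    fun i j =>
      sum_sum_sum_eq_sum_ite_ne_add (fun n d m => (A i j * B n d m - A d m * B n i j) ^ 2) i j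
  simp only [split_diag, sum_add_distrib] at lagrange
  rw [hT, lagrange]
  linarith

/-- The algebraic inequality from Step 1 of the proof of the pointwise estimate
for the second fundamental form: with `A` the second fundamental form,
`B n i j = ∇ₙ A i j`, and `T = |∇A|² − |∇|A||²`, one has
`|A|² T ≥ (1/18) ∑_d (∑_{i,j} (A_{ij} B_{idj} − A_{dj} B_{iij}))²
        + (1/2) ∑_{(n,m) ≠ (i,j)} (A_{ij} B_{ndm} − A_{dm} B_{nij})²`. -/
theorem second_fundamental_form_T_inequality
    (A : Fin 3 → Fin 3 → ℝ) (hA : A ≠ 0) (B : Fin 3 → Fin 3 → Fin 3 → ℝ)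
    (T : ℝ)
    (hT : T = (∑ n, ∑ i, ∑ j, (B n i j) ^ 2)
        - (∑ i, ∑ j, (A i j) ^ 2)⁻¹ * ∑ n, (∑ i, ∑ j, A i j * B n i j) ^ 2) :
    (∑ i, ∑ j, (A i j) ^ 2) * T ≥
      (1 / 18) * ∑ d, (∑ i, ∑ j, (A i j * B i d j - A d j * B i i j)) ^ 2
      + (1 / 2) * ∑ i, ∑ j, ∑ n, ∑ d, ∑ m,
          (if (n, m) ≠ (i, j) then (A i j * B n d m - A d m * B n i j) ^ 2 else 0) :=
  second_fundamental_form_T_inequality_general A B T hT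
end

section
/- Let φ̃ : [0,1] → ℝ be continuously differentiable with φ̃ > 0 on [0,1], let b ∈ ℝ, δ ∈ (0,1), μ₁ > 0, μ₂ ∈ ℝ, and let λ > 0 satisfy λ ≥ 4·max_{t ∈ [0,1]} |φ̃'(t)/φ̃(t)|. Define ψ(τ) := μ₁·∫_{τ+δ}^{1} e^{λs}·s^{−2b} ds + μ₂. Then for all τ ∈ (0, 1−δ): ψ''(τ) + 2·(b/(τ+δ) + φ̃'(τ)/φ̃(τ))·ψ'(τ) ≤ (λ/2)·ψ'(τ) < 0. -/
open Real Set Filter Topology intervalIntegral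

/-! By the fundamental theorem of calculus, `ψ' (τ) = -μ₁ e^{λ(τ+δ)} (τ+δ)^{-2b} < 0` and `ψ`
solves `ψ'' = (λ - 2b/(τ+δ)) ψ'`. Hence `ψ'' + 2 (b/(τ+δ) + φ̃'/φ̃) ψ' = (λ + 2 φ̃'/φ̃) ψ'`, and
`λ + 2 φ̃'/φ̃ ≥ λ/2` because `|φ̃'/φ̃| ≤ λ/4`; multiplying by `ψ' < 0` reverses the inequality. -/

lemma hasDerivAt_exp_mul_mul_rpow (lam p : ℝ) {x : ℝ} (hx : 0 < x) :
    HasDerivAt (fun s : ℝ => exp (lam * s) * s ^ p)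
      (exp (lam * x) * x ^ p * (lam + p / x)) x := by
  have hexp : HasDerivAt (fun s : ℝ => exp (lam * s)) (exp (lam * x) * lam) x := by
    simpa using ((hasDerivAt_id x).const_mul lam).exp
  refine (hexp.mul (hasDerivAt_rpow_const (p := p) (Or.inl hx.ne'))).congr_deriv ?_
  rw [rpow_sub_one hx.ne']
  field_simp

lemma hasDerivAt_integral_add_const_left {f : ℝ → ℝ} (hf : ContinuousOn f (Ioi 0))
    {δ c t : ℝ} (hc : 0 < c) (ht : 0 < t + δ) :
    HasDerivAt (fun t => ∫ s in (t + δ)..c, f s) (-f (t + δ)) t := by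
  have hint : IntervalIntegrable f MeasureTheory.volume (t + δ) c :=
    (hf.mono fun x hx => (lt_min ht hc).trans_le hx.1).intervalIntegrable
  exact (integral_hasDerivAt_left hint (hf.stronglyMeasurableAtFilter isOpen_Ioi _ ht)
    (hf.continuousAt (Ioi_mem_nhds ht))).comp_add_const t δ

section Barrier

variable {ψ : ℝ → ℝ} {lam b δ μ₁ μ₂ : ℝ}

lemma deriv_barrier
    (hψ : ∀ τ, ψ τ = μ₁ * (∫ s in (τ + δ)..1, exp (lam * s) * s ^ (-(2 * b))) + μ₂)
    {τ : ℝ} (hτ : 0 < τ + δ) :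
    deriv ψ τ = -(μ₁ * (exp (lam * (τ + δ)) * (τ + δ) ^ (-(2 * b)))) := by
  have hcont : ContinuousOn (fun s : ℝ => exp (lam * s) * s ^ (-(2 * b))) (Ioi 0) :=
    fun x hx => (hasDerivAt_exp_mul_mul_rpow lam _ hx).continuousAt.continuousWithinAt
  have hderiv :=
    ((hasDerivAt_integral_add_const_left hcont one_pos hτ).const_mul μ₁).add_const μ₂
  rw [funext hψ]
  exact hderiv.deriv.trans (by ring)

lemma deriv_deriv_barrier
    (hψ : ∀ τ, ψ τ = μ₁ * (∫ s in (τ + δ)..1, exp (lam * s) * s ^ (-(2 * b))) + μ₂)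
    {τ : ℝ} (hτ : 0 < τ + δ) :
    deriv (deriv ψ) τ = (lam - 2 * b / (τ + δ)) * deriv ψ τ := by
  have hψ' : deriv ψ =ᶠ[𝓝 τ]
      fun t => -(μ₁ * (exp (lam * (t + δ)) * (t + δ) ^ (-(2 * b)))) := by
    filter_upwards [Ioi_mem_nhds (show -δ < τ by linarith)] with t ht
    exact deriv_barrier hψ (by linarith [mem_Ioi.1 ht])
  have hderiv :=
    (((hasDerivAt_exp_mul_mul_rpow lam (-(2 * b)) hτ).comp_add_const τ δ).const_mul μ₁).neg
  rw [hψ'.deriv_eq, deriv_barrier hψ hτ]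
  exact hderiv.deriv.trans (by ring)

lemma deriv_barrier_neg (hμ₁ : 0 < μ₁)
    (hψ : ∀ τ, ψ τ = μ₁ * (∫ s in (τ + δ)..1, exp (lam * s) * s ^ (-(2 * b))) + μ₂)
    {τ : ℝ} (hτ : 0 < τ + δ) :
    deriv ψ τ < 0 := by
  rw [deriv_barrier hψ hτ, neg_lt_zero]
  exact mul_pos hμ₁ (mul_pos (exp_pos _) (rpow_pos_of_pos hτ _))

end Barrier

theorem regularized_barrier_inequality_general
    (φt φt' : ℝ → ℝ)
    (b δ μ₁ μ₂ lam : ℝ) (hδ : δ ∈ Set.Ioo (0 : ℝ) 1) (hμ₁ : 0 < μ₁)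
    (hlam : 0 < lam)
    (hlam4 : ∀ t ∈ Set.Icc (0 : ℝ) 1, 4 * |φt' t / φt t| ≤ lam)
    (ψ : ℝ → ℝ)
    (hψ : ∀ τ : ℝ, ψ τ =
      μ₁ * (∫ s in (τ + δ)..1, Real.exp (lam * s) * s ^ (-(2 * b))) + μ₂) :
    ∀ τ ∈ Set.Ioo (0 : ℝ) (1 - δ),
      deriv (deriv ψ) τ + 2 * (b / (τ + δ) + φt' τ / φt τ) * deriv ψ τ
          ≤ (lam / 2) * deriv ψ τ
      ∧ (lam / 2) * deriv ψ τ < 0 := by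
  rintro τ ⟨hτ0, hτ1⟩
  have hτδ : 0 < τ + δ := by linarith [hδ.1]
  have hψ'neg := deriv_barrier_neg hμ₁ hψ hτδ
  have hratio := (abs_le.1 (show |φt' τ / φt τ| ≤ lam / 4 by
    linarith [hlam4 τ ⟨hτ0.le, by linarith [hδ.1]⟩])).1
  have hode : deriv (deriv ψ) τ + 2 * (b / (τ + δ) + φt' τ / φt τ) * deriv ψ τ
      = (lam + 2 * (φt' τ / φt τ)) * deriv ψ τ := by
    rw [deriv_deriv_barrier hψ hτδ]
    ring
  refine ⟨?_, mul_neg_of_pos_of_neg (half_pos hlam) hψ'neg⟩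
  rw [hode]
  exact mul_le_mul_of_nonpos_right (by linarith) hψ'neg.le

/-- The key inequality in the proof of Proposition 5.2: with `φ̃` continuously
differentiable and positive on `[0,1]`, `λ > 0` with `λ ≥ 4 max |φ̃'/φ̃|`, the
barrier `ψ(τ) = μ₁ ∫_{τ+δ}^1 e^{λ s} s^{-2b} ds + μ₂` satisfies
`ψ'' + 2 (b/(τ+δ) + φ̃'/φ̃) ψ' ≤ (λ/2) ψ' < 0` on `(0, 1-δ)`. -/
theorem regularized_barrier_inequality
    (φt φt' : ℝ → ℝ)
    (hφdiff : ∀ t ∈ Set.Icc (0 : ℝ) 1, HasDerivWithinAt φt (φt' t) (Set.Icc 0 1) t)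
    (hφ'cont : ContinuousOn φt' (Set.Icc (0 : ℝ) 1))
    (hφpos : ∀ t ∈ Set.Icc (0 : ℝ) 1, 0 < φt t)
    (b δ μ₁ μ₂ lam : ℝ) (hδ : δ ∈ Set.Ioo (0 : ℝ) 1) (hμ₁ : 0 < μ₁)
    (hlam : 0 < lam)
    (hlam4 : ∀ t ∈ Set.Icc (0 : ℝ) 1, 4 * |φt' t / φt t| ≤ lam)
    (ψ : ℝ → ℝ)
    (hψ : ∀ τ : ℝ, ψ τ =
      μ₁ * (∫ s in (τ + δ)..1, Real.exp (lam * s) * s ^ (-(2 * b))) + μ₂) :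
    ∀ τ ∈ Set.Ioo (0 : ℝ) (1 - δ),
      deriv (deriv ψ) τ + 2 * (b / (τ + δ) + φt' τ / φt τ) * deriv ψ τ
          ≤ (lam / 2) * deriv ψ τ
      ∧ (lam / 2) * deriv ψ τ < 0 :=
  regularized_barrier_inequality_general φt φt' b δ μ₁ μ₂ lam hδ hμ₁ hlam hlam4 ψ hψ
end

section
/- Let b, l̃ ∈ ℝ with 2b − 1 < l̃, let λ, Λ > 0, and let σ ∈ {1, −1}. Define P(τ) := σ·(2λ/(l̃+1−2b))·τ^{l̃+1+2b} + Λ²·τ^{4b} for τ > 0. Then there exists τ₀ > 0 such that: (i) P(τ) > 0 for all τ ∈ (0, τ₀]; (ii) the function χ(τ) := ∫_{τ}^{τ₀} P(s)^{−1/2} ds is twice differentiable on (0, τ₀) with χ'(τ) = −P(τ)^{−1/2} < 0; (iii) for all τ ∈ (0, τ₀): (1/(τ^{2b}·χ'(τ)²))·(χ''(τ)/χ'(τ) + 2b/τ) = −σ·λ·τ^{l̃}; and (iv) (1/(2Λ))·τ^{−2b} ≤ −χ'(τ) ≤ (2/Λ)·τ^{−2b} for all τ ∈ (0, τ₀). 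-/
/-!
Write `P(τ) = c τ^{l̃+1+2b} + Λ² τ^{4b}` with `c = σ 2λ/(l̃+1-2b)`. Since
`c τ^{l̃+1+2b} = c τ^{l̃+1-2b} · τ^{4b}` and `l̃+1-2b > 0`, for small `τ` the first term is at most
half of `(Λ τ^{2b})²`, so `P ≍ (Λ τ^{2b})²`; this gives `P > 0` and the two-sided bound on
`χ' = -P^{-1/2}`. For this `χ'` one has `χ''/χ' = -P'/(2P)` and `1/χ'² = P`, so the operator equals
`(4bP - τP')/(2τ^{1+2b})`. The Euler operator `τ d/dτ` multiplies `τ^m` by `m`, so `4bP - τP'`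
kills the `τ^{4b}` term and leaves `-c(l̃+1-2b) τ^{l̃+1+2b} = -2σλ τ^{l̃+1+2b}`.
-/

open Real Set Filter Topology intervalIntegral

theorem exists_pos_forall_Ioc_mul_rpow_le {d : ℝ} (hd : 0 < d) (K : ℝ) {ε : ℝ} (hε : 0 < ε) :
    ∃ τ₀ > 0, ∀ τ ∈ Ioc (0 : ℝ) τ₀, K * τ ^ d ≤ ε := by
  have hlim : Tendsto (fun τ : ℝ => K * τ ^ d) (𝓝[>] 0) (𝓝 0) := by
    have := ((continuousAt_rpow_const 0 d (Or.inr hd.le)).const_mul K).tendsto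
    simpa [zero_rpow hd.ne'] using this.mono_left nhdsWithin_le_nhds
  obtain ⟨τ₀, hτ₀, hsub⟩ :=
    mem_nhdsGT_iff_exists_Ioc_subset.mp (hlim.eventually (eventually_le_nhds hε))
  exact ⟨τ₀, hτ₀, hsub⟩

theorem rpow_neg_half_bounds_of_abs_sub_sq_le {p a : ℝ} (ha : 0 < a)
    (h : |p - a ^ 2| ≤ a ^ 2 / 2) :
    0 < p ∧ (2 * a)⁻¹ ≤ p ^ (-(1 / 2) : ℝ) ∧ p ^ (-(1 / 2) : ℝ) ≤ 2 / a := by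
  obtain ⟨hlo, hhi⟩ := abs_le.mp h
  have hp : 0 < p := by nlinarith
  have hsqrt : p ^ (-(1 / 2) : ℝ) = (√p)⁻¹ := by rw [sqrt_eq_rpow, rpow_neg hp.le]
  have hle : √p ≤ 2 * a := sqrt_le_iff.mpr ⟨by positivity, by nlinarith⟩
  have hge : a / 2 ≤ √p := le_sqrt_of_sq_le (by nlinarith)
  refine ⟨hp, ?_, ?_⟩ <;> rw [hsqrt]
  · exact inv_anti₀ (sqrt_pos.mpr hp) hle
  · simpa using inv_anti₀ (by positivity) hge

theorem hasDerivAt_integral_left_of_continuousOn {f : ℝ → ℝ} {a b τ : ℝ}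
    (hf : ContinuousOn f (Ioc a b)) (hτ : τ ∈ Ioo a b) :
    HasDerivAt (fun t => ∫ s in t..b, f s) (-f τ) τ := by
  have hint : IntervalIntegrable f MeasureTheory.volume τ b :=
    (hf.mono fun s hs => by
      rw [uIcc_of_le hτ.2.le] at hs; exact ⟨hτ.1.trans_le hs.1, hs.2⟩).intervalIntegrable
  exact integral_hasDerivAt_left hint
    ((hf.mono Ioo_subset_Ioc_self).stronglyMeasurableAtFilter isOpen_Ioo τ hτ)
    (hf.continuousAt (Ioc_mem_nhds hτ.1 hτ.2))

theorem HasDerivAt.neg_rpow_neg_half {P : ℝ → ℝ} {P' τ : ℝ} (hP : HasDerivAt P P' τ)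
    (hpos : 0 < P τ) :
    HasDerivAt (fun t => -P t ^ (-(1 / 2) : ℝ)) (P' / (2 * P τ) * P τ ^ (-(1 / 2) : ℝ)) τ := by
  refine (hP.rpow_const (Or.inl hpos.ne')).neg.congr_deriv ?_
  rw [rpow_sub_one hpos.ne']
  field_simp

noncomputable def radialJangOperator (b τ x' x'' : ℝ) : ℝ :=
  1 / (τ ^ (2 * b) * x' ^ 2) * (x'' / x' + 2 * b / τ)

theorem radialJangOperator_neg_rpow_neg_half {b τ p p' : ℝ} (hτ : 0 < τ) (hp : 0 < p) :
    radialJangOperator b τ (-p ^ (-(1 / 2) : ℝ)) (p' / (2 * p) * p ^ (-(1 / 2) : ℝ))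
      = (4 * b * p - τ * p') / (2 * τ * τ ^ (2 * b)) := by
  have hq : 0 < p ^ (-(1 / 2) : ℝ) := rpow_pos_of_pos hp _
  have hq2 : (p ^ (-(1 / 2) : ℝ)) ^ 2 = p⁻¹ := by
    rw [← rpow_natCast, ← rpow_mul hp.le]; norm_num [rpow_neg_one]
  have hu : 0 < τ ^ (2 * b) := rpow_pos_of_pos hτ _
  rw [radialJangOperator, neg_sq, hq2]
  field_simp
  ring

noncomputable def jangProfile (c l b Λ τ : ℝ) : ℝ :=
  c * τ ^ (l + 1 + 2 * b) + Λ ^ 2 * τ ^ (4 * b)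

noncomputable def jangProfileDeriv (c l b Λ τ : ℝ) : ℝ :=
  (c * (l + 1 + 2 * b) * τ ^ (l + 1 + 2 * b) + Λ ^ 2 * (4 * b) * τ ^ (4 * b)) / τ

section jangProfile

variable {c l b Λ τ : ℝ}

theorem abs_jangProfile_sub_sq_le (hτ : 0 < τ) (h : |c| * τ ^ (l + 1 - 2 * b) ≤ Λ ^ 2 / 2) :
    |jangProfile c l b Λ τ - (Λ * τ ^ (2 * b)) ^ 2| ≤ (Λ * τ ^ (2 * b)) ^ 2 / 2 := by
  have h4b : (Λ * τ ^ (2 * b)) ^ 2 = Λ ^ 2 * τ ^ (4 * b) := by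
    rw [mul_pow, ← rpow_mul_natCast hτ.le]; ring_nf
  have hsplit : τ ^ (l + 1 + 2 * b) = τ ^ (l + 1 - 2 * b) * τ ^ (4 * b) := by
    rw [← rpow_add hτ]; ring_nf
  rw [h4b, jangProfile, add_sub_cancel_right, hsplit, ← mul_assoc, abs_mul,
    abs_of_pos (rpow_pos_of_pos hτ _), abs_mul, abs_of_pos (rpow_pos_of_pos hτ (l + 1 - 2 * b)),
    mul_div_right_comm]
  exact mul_le_mul_of_nonneg_right h (rpow_pos_of_pos hτ _).le

theorem continuousOn_jangProfile : ContinuousOn (jangProfile c l b Λ) (Ioi 0) := by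
  intro τ (hτ : 0 < τ)
  exact ((continuousAt_rpow_const τ _ (Or.inl hτ.ne')).const_mul c |>.add
    ((continuousAt_rpow_const τ _ (Or.inl hτ.ne')).const_mul _)).continuousWithinAt

theorem hasDerivAt_jangProfile (hτ : 0 < τ) :
    HasDerivAt (jangProfile c l b Λ) (jangProfileDeriv c l b Λ τ) τ := by
  refine (((hasDerivAt_rpow_const (Or.inl hτ.ne')).const_mul c).add
    ((hasDerivAt_rpow_const (Or.inl hτ.ne')).const_mul (Λ ^ 2))).congr_deriv ?_
  rw [rpow_sub_one hτ.ne', rpow_sub_one hτ.ne', jangProfileDeriv]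
  ring

theorem radialJangOperator_jangProfile (hτ : 0 < τ) (hP : 0 < jangProfile c l b Λ τ) :
    radialJangOperator b τ (-jangProfile c l b Λ τ ^ (-(1 / 2) : ℝ))
      (jangProfileDeriv c l b Λ τ / (2 * jangProfile c l b Λ τ) *
        jangProfile c l b Λ τ ^ (-(1 / 2) : ℝ))
      = -(c * (l + 1 - 2 * b) / 2) * τ ^ l := by
  rw [radialJangOperator_neg_rpow_neg_half hτ hP, jangProfile, jangProfileDeriv,
    show l + 1 + 2 * b = l + 2 * b + 1 by ring, rpow_add_one hτ.ne', rpow_add hτ]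
  have hu : 0 < τ ^ (2 * b) := rpow_pos_of_pos hτ _
  field_simp
  ring

end jangProfile

theorem ode_subsupersolution_construction_general
    (b lt lam Λ σ : ℝ) (hbl : 2 * b - 1 < lt) (hΛ : 0 < Λ)
    (P : ℝ → ℝ)
    (hP : ∀ τ : ℝ, P τ =
      σ * (2 * lam / (lt + 1 - 2 * b)) * τ ^ (lt + 1 + 2 * b) + Λ ^ 2 * τ ^ (4 * b)) :
    ∃ τ₀ > (0 : ℝ),
      (∀ τ ∈ Set.Ioc (0 : ℝ) τ₀, 0 < P τ)
      ∧ ∃ χ' χ'' : ℝ → ℝ,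
          (∀ τ ∈ Set.Ioo (0 : ℝ) τ₀, χ' τ = -(P τ) ^ (-(1 / 2) : ℝ))
          ∧ ∀ τ ∈ Set.Ioo (0 : ℝ) τ₀,
              HasDerivAt (fun t : ℝ => ∫ s in t..τ₀, (P s) ^ (-(1 / 2) : ℝ)) (χ' τ) τ
              ∧ χ' τ < 0
              ∧ HasDerivAt χ' (χ'' τ) τ
              ∧ (1 / (τ ^ (2 * b) * (χ' τ) ^ 2)) * (χ'' τ / χ' τ + 2 * b / τ)
                  = -σ * lam * τ ^ lt
              ∧ (1 / (2 * Λ)) * τ ^ (-(2 * b)) ≤ -χ' τ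
              ∧ -χ' τ ≤ (2 / Λ) * τ ^ (-(2 * b)) := by
  have hd : 0 < lt + 1 - 2 * b := by linarith
  set c := σ * (2 * lam / (lt + 1 - 2 * b))
  obtain rfl : P = jangProfile c lt b Λ := funext hP
  obtain ⟨τ₀, hτ₀, hsmall⟩ :=
    exists_pos_forall_Ioc_mul_rpow_le hd |c| (by positivity : 0 < Λ ^ 2 / 2)
  have hbounds (τ) (hτ : τ ∈ Ioc 0 τ₀) := rpow_neg_half_bounds_of_abs_sub_sq_le
    (mul_pos hΛ (rpow_pos_of_pos hτ.1 (2 * b))) (abs_jangProfile_sub_sq_le hτ.1 (hsmall τ hτ))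
  refine ⟨τ₀, hτ₀, fun τ hτ => (hbounds τ hτ).1, _,
    fun τ => jangProfileDeriv c lt b Λ τ / (2 * jangProfile c lt b Λ τ) *
      jangProfile c lt b Λ τ ^ (-(1 / 2) : ℝ), fun _ _ => rfl, fun τ hτ => ?_⟩
  obtain ⟨hpos, hlower, hupper⟩ := hbounds τ (Ioo_subset_Ioc_self hτ)
  have hcont : ContinuousOn (fun s => jangProfile c lt b Λ s ^ (-(1 / 2) : ℝ)) (Ioc 0 τ₀) :=
    (continuousOn_jangProfile.mono Ioc_subset_Ioi_self).rpow_const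
      fun s hs => Or.inl (hbounds s hs).1.ne'
  refine ⟨hasDerivAt_integral_left_of_continuousOn hcont hτ,
    by simpa using rpow_pos_of_pos hpos _, (hasDerivAt_jangProfile hτ.1).neg_rpow_neg_half hpos,
    ?_, ?_, ?_⟩
  · have hc : c * (lt + 1 - 2 * b) / 2 = σ * lam := by simp only [c]; field_simp
    rw [← radialJangOperator, radialJangOperator_jangProfile hτ.1 hpos, hc]
    ring
  · rw [rpow_neg hτ.1.le, neg_neg]
    convert hlower using 1
    field_simp
  · rw [rpow_neg hτ.1.le, neg_neg]
    convert hupper using 1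
    field_simp

/-- The ODE construction (equations (171)–(174)) in part (2) of Lemma 6.1:
with `P(τ) = σ (2λ/(l̃+1-2b)) τ^{l̃+1+2b} + Λ² τ^{4b}` and `2b - 1 < l̃`, there
is `τ₀ > 0` on which `P > 0`, and `χ(τ) = ∫_τ^{τ₀} P(s)^{-1/2} ds` is twice
differentiable with `χ' = -P^{-1/2} < 0`, solves
`(1/(τ^{2b} χ'²)) (χ''/χ' + 2b/τ) = -σ λ τ^{l̃}`, and satisfies
`(1/(2Λ)) τ^{-2b} ≤ -χ' ≤ (2/Λ) τ^{-2b}`. -/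
theorem ode_subsupersolution_construction
    (b lt lam Λ σ : ℝ) (hbl : 2 * b - 1 < lt) (hlam : 0 < lam) (hΛ : 0 < Λ)
    (hσ : σ = 1 ∨ σ = -1)
    (P : ℝ → ℝ)
    (hP : ∀ τ : ℝ, P τ =
      σ * (2 * lam / (lt + 1 - 2 * b)) * τ ^ (lt + 1 + 2 * b) + Λ ^ 2 * τ ^ (4 * b)) :
    ∃ τ₀ > (0 : ℝ),
      (∀ τ ∈ Set.Ioc (0 : ℝ) τ₀, 0 < P τ)
      ∧ ∃ χ' χ'' : ℝ → ℝ,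
          (∀ τ ∈ Set.Ioo (0 : ℝ) τ₀, χ' τ = -(P τ) ^ (-(1 / 2) : ℝ))
          ∧ ∀ τ ∈ Set.Ioo (0 : ℝ) τ₀,
              HasDerivAt (fun t : ℝ => ∫ s in t..τ₀, (P s) ^ (-(1 / 2) : ℝ)) (χ' τ) τ
              ∧ χ' τ < 0
              ∧ HasDerivAt χ' (χ'' τ) τ
              ∧ (1 / (τ ^ (2 * b) * (χ' τ) ^ 2)) * (χ'' τ / χ' τ + 2 * b / τ)
                  = -σ * lam * τ ^ lt
              ∧ (1 / (2 * Λ)) * τ ^ (-(2 * b)) ≤ -χ' τ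
              ∧ -χ' τ ≤ (2 / Λ) * τ ^ (-(2 * b)) :=
  ode_subsupersolution_construction_general b lt lam Λ σ hbl hΛ P hP
end

section
/- For every constant c > 0 there exist ρ ∈ (0, 1) and C > 0 with the following property: if w : ℝ³ → ℝ is twice continuously differentiable on the open unit ball centered at the origin, satisfies w(0) = 0 and ∇w(0) = 0, and satisfies the Hessian bound ‖∇²w(y)‖ ≤ c·(1 + |∇w(y)|²)^{3/2} for every y in the unit ball, then |w(y)| + |∇w(y)| + ‖∇²w(y)‖ ≤ C for every y with |y| ≤ ρ. -/
/-!
Along each ray `t ↦ t • y` the gradient starts at `0`, and as long as it stays below `1/2` the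
hypothesis bounds the Hessian by `2c`, so by the mean value theorem the gradient moves by at
most `2cρ ≤ 1/4`. A continuity argument shows that the gradient therefore never reaches `1/2`
on the ball of radius `ρ = min (1/2) (1/(8c))`; the Hessian is then at most `2c` there, and
`|w| ≤ ρ/4` follows by integrating the gradient from `0`.
-/

open Real Set Metric

theorem one_add_sq_rpow_three_halves_le_two {x : ℝ} (hx0 : 0 ≤ x) (hx : x ≤ 1 / 2) :
    (1 + x ^ 2) ^ ((3 : ℝ) / 2) ≤ 2 := by
  calc (1 + x ^ 2) ^ ((3 : ℝ) / 2) ≤ (1 + x ^ 2) ^ (2 : ℝ) :=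
        rpow_le_rpow_of_exponent_le (by nlinarith) (by norm_num)
    _ = (1 + x ^ 2) ^ 2 := rpow_two _
    _ ≤ 2 := by nlinarith [show x ^ 2 ≤ 1 / 4 by nlinarith]

theorem ContinuousOn.forall_le_of_bootstrap {g : ℝ → ℝ} {l r a b : ℝ} (hba : b < a)
    (hg : ContinuousOn g (Icc l r))
    (hstep : ∀ s ∈ Icc l r, (∀ u ∈ Ico l s, g u ≤ a) → g s ≤ b) :
    ∀ t ∈ Icc l r, g t ≤ b := by
  have hlt : ∀ t ∈ Icc l r, g t < a := by
    by_contra! ⟨t, ht, hat⟩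
    have hclosed : IsClosed (Icc l r ∩ g ⁻¹' Ici a) :=
      hg.preimage_isClosed_of_isClosed isClosed_Icc isClosed_Ici
    -- at the first time `T` at which `g` reaches `a`, `hstep` gives `g T ≤ b < a`
    obtain ⟨T, ⟨hT, haT⟩, hleast⟩ :=
      (isCompact_Icc.of_isClosed_subset hclosed inter_subset_left).exists_isLeast ⟨t, ht, hat⟩
    have hbefore : ∀ u ∈ Ico l T, g u ≤ a := fun u hu ↦ by
      by_contra! hau
      exact hu.2.not_ge (hleast ⟨⟨hu.1, hu.2.le.trans hT.2⟩, hau.le⟩)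
    linarith [hstep T hT hbefore, show a ≤ g T from haT]
  exact fun t ht ↦ hstep t ht fun u hu ↦ (hlt u ⟨hu.1, hu.2.le.trans ht.2⟩).le

section

variable {E F : Type*} [NormedAddCommGroup E] [NormedSpace ℝ E]
  [NormedAddCommGroup F] [NormedSpace ℝ F]

theorem norm_image_smul_sub_image_zero_le {f : E → F} {y : E} {s C : ℝ} (hs : 0 ≤ s)
    (hf : ∀ t ∈ Icc 0 s, DifferentiableAt ℝ f (t • y))
    (bound : ∀ t ∈ Ico 0 s, ‖fderiv ℝ f (t • y)‖ ≤ C) :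
    ‖f (s • y) - f 0‖ ≤ C * ‖y‖ * s := by
  have hderiv : ∀ t ∈ Icc 0 s, HasDerivWithinAt (fun t : ℝ ↦ f (t • y))
      (fderiv ℝ f (t • y) y) (Icc 0 s) t := fun t ht ↦ by
    simpa [Function.comp_def] using ((hf t ht).hasFDerivAt.comp_hasDerivAt t
      ((hasDerivAt_id t).smul_const y)).hasDerivWithinAt
  have hbound : ∀ t ∈ Ico 0 s, ‖fderiv ℝ f (t • y) y‖ ≤ C * ‖y‖ := fun t ht ↦
    ((fderiv ℝ f (t • y)).le_opNorm y).trans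
      (mul_le_mul_of_nonneg_right (bound t ht) (norm_nonneg y))
  simpa using norm_image_sub_le_of_norm_deriv_le_segment' hderiv hbound s ⟨hs, le_rfl⟩

theorem norm_le_of_norm_fderiv_le_of_norm_le {f : E → F} {r a K : ℝ} (hK : 0 ≤ K)
    (hKr : K * r < a) (hf : ∀ y ∈ closedBall (0 : E) r, DifferentiableAt ℝ f y)
    (hf0 : f 0 = 0)
    (hbound : ∀ y ∈ closedBall (0 : E) r, ‖f y‖ ≤ a → ‖fderiv ℝ f y‖ ≤ K) :
    ∀ y ∈ closedBall (0 : E) r, ‖f y‖ ≤ K * r := by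
  intro y hy
  have hray : ∀ t ∈ Icc (0 : ℝ) 1, t • y ∈ closedBall (0 : E) r := fun t ht ↦
    (convex_closedBall 0 r).smul_mem_of_zero_mem (mem_closedBall_self (dist_nonneg.trans hy)) hy ht
  have hcont : ContinuousOn (fun t : ℝ ↦ ‖f (t • y)‖) (Icc 0 1) := fun t ht ↦
    ((hf _ (hray t ht)).continuousAt.comp (f := fun t : ℝ ↦ t • y) (by fun_prop)
      ).norm.continuousWithinAt
  have hstep : ∀ s ∈ Icc (0 : ℝ) 1,
      (∀ u ∈ Ico 0 s, ‖f (u • y)‖ ≤ a) → ‖f (s • y)‖ ≤ K * r := by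
    intro s hs hsmall
    have hray_s : ∀ t ∈ Icc 0 s, t • y ∈ closedBall (0 : E) r := fun t ht ↦
      hray t ⟨ht.1, ht.2.trans hs.2⟩
    have hmvt := norm_image_smul_sub_image_zero_le hs.1 (fun t ht ↦ hf _ (hray_s t ht))
      fun t ht ↦ hbound _ (hray_s t (Ico_subset_Icc_self ht)) (hsmall t ht)
    rw [hf0, sub_zero] at hmvt
    have hy' : ‖y‖ ≤ r := mem_closedBall_zero_iff.mp hy
    calc ‖f (s • y)‖ ≤ K * ‖y‖ * s := hmvt
      _ ≤ K * r * 1 :=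
        mul_le_mul (by gcongr) hs.2 hs.1 (mul_nonneg hK ((norm_nonneg y).trans hy'))
      _ = K * r := mul_one _
  simpa using hcont.forall_le_of_bootstrap hKr hstep 1 ⟨zero_le_one, le_rfl⟩

end

/-- The 'simple calculus' step in the proof of the parametric estimates
(Theorem 2.4): for every `c > 0` there exist `ρ ∈ (0,1)` and `C > 0` such that
any `C²` function `w` on the open unit ball of `ℝ³` with `w(0) = 0`,
`∇w(0) = 0`, and Hessian bound `‖∇²w‖ ≤ c (1 + |∇w|²)^{3/2}` satisfies
`|w| + |∇w| + ‖∇²w‖ ≤ C` on the ball of radius `ρ`. -/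
theorem parametric_calculus_estimate (c : ℝ) (hc : 0 < c) :
    ∃ ρ ∈ Set.Ioo (0 : ℝ) 1, ∃ C > (0 : ℝ),
      ∀ w : EuclideanSpace ℝ (Fin 3) → ℝ,
        ContDiffOn ℝ 2 w (Metric.ball 0 1) →
        w 0 = 0 →
        fderiv ℝ w 0 = 0 →
        (∀ y ∈ Metric.ball (0 : EuclideanSpace ℝ (Fin 3)) 1,
          ‖fderiv ℝ (fderiv ℝ w) y‖ ≤ c * (1 + ‖fderiv ℝ w y‖ ^ 2) ^ ((3 : ℝ) / 2)) →
        ∀ y : EuclideanSpace ℝ (Fin 3), ‖y‖ ≤ ρ →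
          |w y| + ‖fderiv ℝ w y‖ + ‖fderiv ℝ (fderiv ℝ w) y‖ ≤ C := by
  set ρ := min (1 / 2) (1 / (8 * c))
  have hρ : 0 < ρ := lt_min (by norm_num) (by positivity)
  have hρ_half : ρ ≤ 1 / 2 := min_le_left _ _
  have hcρ : 2 * c * ρ ≤ 1 / 4 :=
    calc 2 * c * ρ ≤ 2 * c * (1 / (8 * c)) := by gcongr; exact min_le_right _ _
      _ = 1 / 4 := by field_simp; norm_num
  refine ⟨ρ, ⟨hρ, by linarith⟩, 2 * c + 1 / 2, by positivity, ?_⟩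
  intro w hw hw0 hDw0 hH y hy
  have hsub : closedBall (0 : EuclideanSpace ℝ (Fin 3)) ρ ⊆ ball 0 1 :=
    closedBall_subset_ball (by linarith)
  have hcontDiff : ∀ z ∈ closedBall (0 : EuclideanSpace ℝ (Fin 3)) ρ, ContDiffAt ℝ 2 w z :=
    fun z hz ↦ hw.contDiffAt (isOpen_ball.mem_nhds (hsub hz))
  have hhess : ∀ z ∈ closedBall (0 : EuclideanSpace ℝ (Fin 3)) ρ,
      ‖fderiv ℝ w z‖ ≤ 1 / 2 → ‖fderiv ℝ (fderiv ℝ w) z‖ ≤ 2 * c := fun z hz hgrad ↦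
    (hH z (hsub hz)).trans <| by
      nlinarith [one_add_sq_rpow_three_halves_le_two (norm_nonneg _) hgrad]
  have hgrad : ∀ z ∈ closedBall (0 : EuclideanSpace ℝ (Fin 3)) ρ,
      ‖fderiv ℝ w z‖ ≤ 2 * c * ρ :=
    norm_le_of_norm_fderiv_le_of_norm_le (by positivity) (by linarith)
      (fun z hz ↦ ((hcontDiff z hz).fderiv_right (m := 1) (by norm_num)).differentiableAt
        one_ne_zero) hDw0 hhess
  have hy' : y ∈ closedBall (0 : EuclideanSpace ℝ (Fin 3)) ρ := mem_closedBall_zero_iff.mpr hy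
  have hval : |w y| ≤ 2 * c * ρ * ρ := by
    simpa [hw0] using (convex_closedBall _ ρ).norm_image_sub_le_of_norm_fderiv_le
      (fun z hz ↦ (hcontDiff z hz).differentiableAt (by norm_num)) hgrad
      (mem_closedBall_self hρ.le) hy' |>.trans (by gcongr; simpa using hy)
  nlinarith [hgrad y hy', hhess y hy' ((hgrad y hy').trans (by linarith))]
end
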